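/- arXiv:1506.03165 — 2 statements merged into one kernel-verified Lean document; each statement's English description precedes it below -/
import Mathlib

section
/- Let R be a commutative ring, f a nonzerodivisor, (φ, ψ) an m×m matrix factorization of f, and M = coker(φ), N = coker(ψ). Then there is an exact sequence of R/(f)-modules 0 → N → (R/(f))^m → M → 0, where the surjection is induced by the quotient R^m → M. -/
open Matrix

/-! The map `coker ψ → R^m / f R^m` is induced by `φ`: it is well defined because `φ ψ = f`,
and injective because `φ v = f w` gives `f v = ψ φ v = f ψ w`, so `v = ψ w` once `f` is
cancelled. Its image is `range φ / f R^m`, which is exactly the kernel of the projection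
`R^m / f R^m → R^m / range φ = M`; that projection exists because `f R^m = range (φ ψ) ≤ range φ`. -/

namespace LinearMap

variable {R P Q : Type*} [CommRing R] [AddCommGroup P] [Module R P] [AddCommGroup Q] [Module R Q]
  {f : R} {φ : P →ₗ[R] Q} {ψ : Q →ₗ[R] P}

lemma range_smul_id_le_range_of_comp_eq (h : φ ∘ₗ ψ = f • id) : range (f • id) ≤ range φ :=
  h ▸ range_comp_le_range ψ φ

lemma comap_range_smul_id_eq_range_of_comp_eq (hf : IsSMulRegular P f)
    (h₁ : φ ∘ₗ ψ = f • id) (h₂ : ψ ∘ₗ φ = f • id) :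
    (range (f • id)).comap φ = range ψ := by
  apply le_antisymm
  · rintro v ⟨w, hw⟩
    refine ⟨w, hf ?_⟩
    calc f • ψ w = ψ (φ v) := by rw [← hw, smul_apply, id_apply, map_smul]
      _ = f • v := congr($h₂ v)
  · rw [← Submodule.map_le_iff_le_comap, ← range_comp, h₁]

end LinearMap

lemma Matrix.mulVecLin_comp_eq_smul_id {R : Type*} [CommRing R] {m : ℕ} {f : R}
    {φ ψ : Matrix (Fin m) (Fin m) R} (h : φ * ψ = f • (1 : Matrix (Fin m) (Fin m) R)) :
    φ.mulVecLin ∘ₗ ψ.mulVecLin = f • LinearMap.id := by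
  rw [← mulVecLin_mul, h]
  ext
  simp

/-- For an `m × m` matrix factorization `(φ, ψ)` of a nonzerodivisor `f`, with
`M = coker φ` and `N = coker ψ`, there is a short exact sequence
`0 → N → (R/(f))^m → M → 0`, where `(R/(f))^m` is realized as `R^m / f·R^m` and the
surjection is induced by the quotient map `R^m → M`.  (All the modules involved are
annihilated by `f`, hence are `R/(f)`-modules, and the `R`-linear maps between them are
automatically `R/(f)`-linear.) -/
theorem syzygy_ses_of_matrixFactorization {R : Type*} [CommRing R] {m : ℕ}
    (f : R) (hf : f ∈ nonZeroDivisors R) (φ ψ : Matrix (Fin m) (Fin m) R)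
    (h1 : φ * ψ = f • (1 : Matrix (Fin m) (Fin m) R))
    (h2 : ψ * φ = f • (1 : Matrix (Fin m) (Fin m) R)) :
    ∃ (α : ((Fin m → R) ⧸ LinearMap.range ψ.mulVecLin) →ₗ[R]
        ((Fin m → R) ⧸ LinearMap.range (f • (LinearMap.id : (Fin m → R) →ₗ[R] (Fin m → R)))))
      (g : ((Fin m → R) ⧸ LinearMap.range (f • (LinearMap.id : (Fin m → R) →ₗ[R] (Fin m → R))))
        →ₗ[R] ((Fin m → R) ⧸ LinearMap.range φ.mulVecLin)),
      Function.Injective α ∧ Function.Surjective g ∧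
      LinearMap.range α = LinearMap.ker g ∧
      ∀ v : Fin m → R, g (Submodule.Quotient.mk v) = Submodule.Quotient.mk v := by
  have hreg : IsSMulRegular (Fin m → R) f :=
    IsSMulRegular.pi fun _ => isSMulRegular_iff_mem_nonZeroSMulDivisors.mpr hf.1
  have hcomap := LinearMap.comap_range_smul_id_eq_range_of_comp_eq hreg
    (mulVecLin_comp_eq_smul_id h1) (mulVecLin_comp_eq_smul_id h2)
  have hle := LinearMap.range_smul_id_le_range_of_comp_eq (mulVecLin_comp_eq_smul_id h1)
  refine ⟨Submodule.mapQ _ _ φ.mulVecLin hcomap.ge, Submodule.factor hle, ?_,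
    Submodule.factor_surjective hle, ?_, fun v => Submodule.factor_mk hle v⟩
  · rw [← LinearMap.ker_eq_bot, Submodule.ker_mapQ, hcomap, Submodule.mkQ_map_self]
  · rw [Submodule.range_mapQ, Submodule.ker_mapQ, Submodule.comap_id]
end

section
/- Let 0 → M₁ → M₂ → M₃ → 0 be a short exact sequence of finite free modules over a commutative ring R in which M₃ is also free (so the sequence splits). Then for each k there is an exact sequence 0 → Λ^k M₁ → Λ^k M₂ whose cokernel admits a filtration with graded pieces Λ^i M₁ ⊗ Λ^(k-i) M₃ for 0 ≤ i < k. -/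
/-!
A section of `g` (which exists because `M₃` is projective) identifies `M₂` with `M₁ × M₃`, with
`f` the first inclusion; so `f`, and hence `⋀^k f`, has a retraction. The exterior algebra of a
product is the tensor product of the exterior algebras, compatibly with the gradings, so `⋀^k M₂`
is the internal direct sum of the images of `⋀^t M₁ ⊗ ⋀^(k-t) M₃`, `0 ≤ t ≤ k`, and the summand
`t = k` is the image of `⋀^k f`. Modulo that summand, the sums of the summands with `t < j` form
the filtration.
-/

open ExteriorAlgebra TensorProduct

variable {R M N : Type*} [CommRing R] [AddCommGroup M] [Module R M] [AddCommGroup N] [Module R N]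

theorem extPowerMap_mem (k : ℕ) (f : M →ₗ[R] N) :
    ∀ x ∈ ⋀[R]^k M, ExteriorAlgebra.map f x ∈ ⋀[R]^k N := by
  intro x hx
  have h : Submodule.map (ExteriorAlgebra.map f).toLinearMap (⋀[R]^k M) ≤ ⋀[R]^k N := by
    rw [← ιMulti_span_fixedDegree, ← ιMulti_span_fixedDegree, Submodule.map_span]
    refine Submodule.span_mono ?_
    rintro _ ⟨_, ⟨v, rfl⟩, rfl⟩
    exact ⟨f ∘ v, (ExteriorAlgebra.map_apply_ιMulti f v).symm⟩
  exact h ⟨x, hx, rfl⟩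

/-- The map `⋀^k M → ⋀^k N` on `k`-th exterior powers induced by a linear map
`f : M → N`. -/
noncomputable def extPowerMap (k : ℕ) (f : M →ₗ[R] N) : (⋀[R]^k M) →ₗ[R] (⋀[R]^k N) :=
  (ExteriorAlgebra.map f).toLinearMap.restrict (extPowerMap_mem k f)

theorem extPowerMap_eq_map (k : ℕ) (f : M →ₗ[R] N) :
    extPowerMap k f = exteriorPower.map k f := by
  apply exteriorPower.linearMap_ext
  ext v
  rw [LinearMap.compAlternatingMap_apply, LinearMap.compAlternatingMap_apply,
    exteriorPower.map_apply_ιMulti]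
  exact ExteriorAlgebra.map_apply_ιMulti f v

namespace Submodule

variable {R V : Type*} [Ring R] [AddCommGroup V] [Module R V]

theorem nonempty_quotient_equiv_of_disjoint_of_sup_eq {A C B : Submodule R V}
    (h : Disjoint A C) (hB : A ⊔ C = B) : Nonempty ((B ⧸ C.comap B.subtype) ≃ₗ[R] A) := by
  subst hB
  exact ⟨(LinearMap.quotientInfEquivSupQuotient A C).symm ≪≫ₗ
    quotEquivOfEqBot _ (by simp [disjoint_iff_comap_eq_bot.mp h])⟩

noncomputable def mapMkQEquivOfDisjoint {A p : Submodule R V} (h : Disjoint A p) :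
    A.map p.mkQ ≃ₗ[R] A :=
  LinearEquiv.ofEq _ _ (by rw [LinearMap.range_comp, range_subtype]) ≪≫ₗ
    (LinearEquiv.ofInjective (p.mkQ ∘ₗ A.subtype) (by
      rw [← LinearMap.ker_eq_bot, LinearMap.ker_comp, ker_mkQ, ← disjoint_iff_comap_eq_bot]
      exact h)).symm

theorem disjoint_map_mkQ {A B p : Submodule R V} (h : Disjoint A (B ⊔ p)) :
    Disjoint (A.map p.mkQ) (B.map p.mkQ) := by
  rw [disjoint_def]
  rintro _ ⟨a, ha, rfl⟩ ⟨b, hb, hab⟩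
  rw [mkQ_apply, mkQ_apply, Quotient.eq] at hab
  have : a ∈ B ⊔ p := by simpa using add_mem (mem_sup_left hb) (mem_sup_right (neg_mem hab))
  rw [disjoint_def.mp h a ha this, map_zero]

theorem _root_.iSupIndep.exists_filtration_quotient_last {k : ℕ}
    {N : Fin (k + 1) → Submodule R V} (hind : iSupIndep N) (htop : ⨆ t, N t = ⊤) :
    ∃ W : Fin (k + 1) → Submodule R (V ⧸ N (Fin.last k)),
      Monotone W ∧ W 0 = ⊥ ∧ W (Fin.last k) = ⊤ ∧
      ∀ i : Fin k, Nonempty ((W i.succ ⧸ (W i.castSucc).comap (W i.succ).subtype) ≃ₗ[R]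
        N i.castSucc) := by
  set p := N (Fin.last k)
  let F : ℕ → Submodule R V := fun n => ⨆ t : Fin (k + 1), ⨆ _ : (t : ℕ) < n, N t
  have hF_mono : Monotone F := fun m n hmn => biSup_mono fun t ht => ht.trans_le hmn
  have hF_succ (t : Fin (k + 1)) : F (t + 1) = N t ⊔ F t := by
    refine le_antisymm (iSup₂_le fun s hs => ?_) (sup_le (le_biSup N t.val.lt_succ_self)
      (hF_mono t.val.le_succ))
    rcases Nat.lt_succ_iff_lt_or_eq.mp hs with hs | hs
    · exact le_sup_of_le_right (le_biSup N hs)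
    · rw [Fin.ext hs]
      exact le_sup_left
  have hdisj (t : Fin (k + 1)) (ht : t ≠ Fin.last k) : Disjoint (N t) (F t ⊔ p) :=
    (hind t).mono_right (sup_le (biSup_mono fun s hs => Fin.ne_of_lt hs) (le_biSup N ht.symm))
  refine ⟨fun j => (F j).map p.mkQ, fun i j hij => map_mono (hF_mono hij), ?_, ?_, fun i => ?_⟩
  · simp [F]
  · rw [map_mkQ_eq_top, eq_top_iff, ← htop]
    refine iSup_le fun t => ?_
    rcases eq_or_ne t (Fin.last k) with rfl | ht
    · exact le_sup_left
    · exact le_sup_of_le_right (le_biSup N (Fin.val_lt_last ht))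
  · have hi := hdisj i.castSucc (Fin.castSucc_ne_last i)
    exact (nonempty_quotient_equiv_of_disjoint_of_sup_eq (disjoint_map_mkQ hi)
      (by rw [← map_sup, ← hF_succ]; rfl)).map
      (· ≪≫ₗ mapMkQEquivOfDisjoint (hi.mono_right le_sup_right))

end Submodule

theorem iSupIndep_range_of_comp_eq_zero {R V ι : Type*} [Semiring R] [AddCommMonoid V]
    [Module R V] {P : ι → Type*} [∀ i, AddCommMonoid (P i)] [∀ i, Module R (P i)]
    (φ : ∀ i, P i →ₗ[R] V) (π : ∀ i, V →ₗ[R] P i) (hinj : ∀ i, Function.Injective (π i ∘ₗ φ i))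
    (hzero : ∀ i j, i ≠ j → π i ∘ₗ φ j = 0) :
    iSupIndep fun i => LinearMap.range (φ i) := by
  intro i
  have hker : ⨆ (j) (_ : j ≠ i), LinearMap.range (φ j) ≤ LinearMap.ker (π i) :=
    iSup₂_le fun j hj => LinearMap.range_le_ker_iff.mpr (hzero i j hj.symm)
  rw [Submodule.disjoint_def]
  rintro _ ⟨u, rfl⟩ hu
  rw [hinj i (by simpa using hker hu : π i (φ i u) = π i (φ i 0)), map_zero]

theorem DirectSum.Decomposition.le_biSup_of_le_of_iSup_eq_top {R A κ ι : Type*} [Semiring R]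
    [AddCommMonoid A] [Module R A] [DecidableEq κ] (ℳ : κ → Submodule R A)
    [DirectSum.Decomposition ℳ] (Q : ι → Submodule R A) (deg : ι → κ)
    (hQ : ∀ a, Q a ≤ ℳ (deg a)) (htop : ⨆ a, Q a = ⊤) (n : κ) :
    ℳ n ≤ ⨆ (a) (_ : deg a = n), Q a := by
  let π : A →ₗ[R] A := (ℳ n).subtype ∘ₗ DirectSum.component R κ (fun i => ℳ i) n ∘ₗ
    (DirectSum.decomposeLinearEquiv ℳ).toLinearMap
  have hπ : Submodule.map π ⊤ ≤ ⨆ (a) (_ : deg a = n), Q a := by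
    rw [← htop, Submodule.map_iSup]
    refine iSup_mono fun a => ?_
    rintro _ ⟨y, hy, rfl⟩
    by_cases h : deg a = n
    · have : π y = y := decompose_of_mem_same ℳ (h ▸ hQ a hy)
      rw [this]
      exact Submodule.mem_iSup_of_mem h hy
    · have : π y = 0 := decompose_of_mem_ne ℳ (hQ a hy) h
      rw [this]
      exact zero_mem _
  intro x hx
  exact (decompose_of_mem_same ℳ hx : π x = x) ▸ hπ (Submodule.mem_map_of_mem trivial)

theorem DirectSum.iSup_range_lof {R ι : Type*} [Semiring R] {M : ι → Type*}
    [∀ i, AddCommMonoid (M i)] [∀ i, Module R (M i)] [DecidableEq ι] :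
    ⨆ i, LinearMap.range (DirectSum.lof R ι M i) = ⊤ :=
  DFinsupp.iSup_range_lsingle

namespace ExteriorAlgebra

variable {M₁ M₂ M₃ : Type*} [AddCommGroup M₁] [Module R M₁] [AddCommGroup M₂] [Module R M₂]
  [AddCommGroup M₃] [Module R M₃] (e : (M₁ × M₃) ≃ₗ[R] M₂)

/-- `⋀(M₁ × M₃)` is the Clifford algebra of an orthogonal sum of zero forms, hence the graded tensor
product of `⋀M₁` and `⋀M₃`; the Koszul signs affect only the multiplication, not the module. -/
noncomputable def tensorEquivOfProdEquiv :
    ExteriorAlgebra R M₁ ⊗[R] ExteriorAlgebra R M₃ ≃ₗ[R] ExteriorAlgebra R M₂ :=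
  GradedTensorProduct.of R (CliffordAlgebra.evenOdd (0 : QuadraticForm R M₁))
      (CliffordAlgebra.evenOdd (0 : QuadraticForm R M₃)) ≪≫ₗ
    (CliffordAlgebra.prodEquiv 0 0).symm.toLinearEquiv ≪≫ₗ
    (CliffordAlgebra.equivOfIsometry
      (Q₂ := (0 : QuadraticForm R M₂)) ⟨e, fun _ => by simp⟩).toLinearEquiv

theorem tensorEquivOfProdEquiv_tmul (x : ExteriorAlgebra R M₁) (y : ExteriorAlgebra R M₃) :
    tensorEquivOfProdEquiv e (x ⊗ₜ y) =
      map (e.toLinearMap ∘ₗ LinearMap.inl R M₁ M₃) x *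
        map (e.toLinearMap ∘ₗ LinearMap.inr R M₁ M₃) y := by
  change CliffordAlgebra.map _ (CliffordAlgebra.toProd 0 0 (x ᵍ⊗ₜ y)) = _
  rw [CliffordAlgebra.toProd, GradedTensorProduct.lift_tmul, map_mul, ← AlgHom.comp_apply,
    ← AlgHom.comp_apply, CliffordAlgebra.map_comp_map, CliffordAlgebra.map_comp_map]
  rfl

open DirectSum

noncomputable def bigradedEquivOfProdEquiv :
    (⨁ p : ℕ × ℕ, ⋀[R]^p.1 M₁ ⊗[R] ⋀[R]^p.2 M₃) ≃ₗ[R] ExteriorAlgebra R M₂ :=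
  (TensorProduct.directSum R R (fun i : ℕ => ⋀[R]^i M₁) (fun j : ℕ => ⋀[R]^j M₃)).symm ≪≫ₗ
    TensorProduct.congr (decomposeLinearEquiv (fun i : ℕ => ⋀[R]^i M₁)).symm
      (decomposeLinearEquiv (fun j : ℕ => ⋀[R]^j M₃)).symm ≪≫ₗ
    tensorEquivOfProdEquiv e

theorem bigradedEquivOfProdEquiv_lof_tmul (i j : ℕ) (x : ⋀[R]^i M₁) (y : ⋀[R]^j M₃) :
    bigradedEquivOfProdEquiv e (lof R _ _ (i, j) (x ⊗ₜ y)) =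
      map (e.toLinearMap ∘ₗ LinearMap.inl R M₁ M₃) x *
        map (e.toLinearMap ∘ₗ LinearMap.inr R M₁ M₃) y := by
  rw [bigradedEquivOfProdEquiv, LinearEquiv.trans_apply, LinearEquiv.trans_apply,
    TensorProduct.directSum_symm_lof_tmul, TensorProduct.congr_tmul,
    decomposeLinearEquiv_symm_lof, decomposeLinearEquiv_symm_lof, tensorEquivOfProdEquiv_tmul]

theorem bigradedEquivOfProdEquiv_lof_mem {i j n : ℕ} (h : i + j = n)
    (u : ⋀[R]^i M₁ ⊗[R] ⋀[R]^j M₃) :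
    bigradedEquivOfProdEquiv e (lof R _ _ (i, j) u) ∈ ⋀[R]^n M₂ := by
  subst h
  induction u using TensorProduct.induction_on with
  | zero => simp
  | tmul x y =>
    rw [bigradedEquivOfProdEquiv_lof_tmul]
    exact SetLike.mul_mem_graded (extPowerMap_mem i _ _ x.2) (extPowerMap_mem j _ _ y.2)
  | add u v hu hv =>
    rw [map_add, map_add]
    exact add_mem hu hv

variable (k : ℕ)

noncomputable def tensorSummand (t : Fin (k + 1)) :
    (⋀[R]^(t : ℕ) M₁ ⊗[R] ⋀[R]^(k - t) M₃) →ₗ[R] ⋀[R]^k M₂ :=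
  ((bigradedEquivOfProdEquiv e).toLinearMap ∘ₗ lof R _ _ ((t : ℕ), k - t)).codRestrict _
    (bigradedEquivOfProdEquiv_lof_mem e (Nat.add_sub_cancel' (Nat.lt_succ_iff.mp t.isLt)))

theorem tensorSummand_tmul (t : Fin (k + 1)) (x : ⋀[R]^(t : ℕ) M₁) (y : ⋀[R]^(k - t) M₃) :
    (tensorSummand e k t (x ⊗ₜ y) : ExteriorAlgebra R M₂) =
      map (e.toLinearMap ∘ₗ LinearMap.inl R M₁ M₃) x *
        map (e.toLinearMap ∘ₗ LinearMap.inr R M₁ M₃) y :=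
  bigradedEquivOfProdEquiv_lof_tmul e _ _ x y

noncomputable def tensorSummandProj (t : Fin (k + 1)) :
    ⋀[R]^k M₂ →ₗ[R] (⋀[R]^(t : ℕ) M₁ ⊗[R] ⋀[R]^(k - t) M₃) :=
  component R _ _ ((t : ℕ), k - t) ∘ₗ (bigradedEquivOfProdEquiv e).symm.toLinearMap ∘ₗ
    (⋀[R]^k M₂).subtype

theorem tensorSummandProj_comp_tensorSummand_self (t : Fin (k + 1)) :
    tensorSummandProj e k t ∘ₗ tensorSummand e k t = LinearMap.id := by
  ext u
  simp [tensorSummandProj, tensorSummand]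

theorem tensorSummandProj_comp_tensorSummand_of_ne {t s : Fin (k + 1)} (h : t ≠ s) :
    tensorSummandProj e k t ∘ₗ tensorSummand e k s = 0 := by
  ext u
  simp [tensorSummandProj, tensorSummand, component.of, Fin.val_injective.ne h.symm]

theorem tensorSummand_injective (t : Fin (k + 1)) : Function.Injective (tensorSummand e k t) :=
  Function.LeftInverse.injective (g := tensorSummandProj e k t)
    (LinearMap.congr_fun (tensorSummandProj_comp_tensorSummand_self e k t))

theorem iSupIndep_range_tensorSummand :
    iSupIndep fun t => LinearMap.range (tensorSummand e k t) :=
  iSupIndep_range_of_comp_eq_zero _ (tensorSummandProj e k)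
    (fun t => by rw [tensorSummandProj_comp_tensorSummand_self]; exact Function.injective_id)
    (fun _ _ => tensorSummandProj_comp_tensorSummand_of_ne e k)

theorem iSup_range_tensorSummand : ⨆ t, LinearMap.range (tensorSummand e k t) = ⊤ := by
  have htop : ⨆ p, LinearMap.range ((bigradedEquivOfProdEquiv e).toLinearMap ∘ₗ
      lof R (ℕ × ℕ) (fun p => ⋀[R]^p.1 M₁ ⊗[R] ⋀[R]^p.2 M₃) p) = ⊤ := by
    simp_rw [LinearMap.range_comp, ← Submodule.map_iSup, iSup_range_lof, Submodule.map_top,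
      LinearEquiv.range]
  rw [eq_top_iff, ← Submodule.map_le_map_iff_of_injective (⋀[R]^k M₂).injective_subtype,
    Submodule.map_top, Submodule.range_subtype, Submodule.map_iSup]
  refine (DirectSum.Decomposition.le_biSup_of_le_of_iSup_eq_top (fun n : ℕ => ⋀[R]^n M₂) _
    (fun p => p.1 + p.2) (fun p => ?_) htop k).trans (iSup₂_le fun ⟨i, j⟩ hij => ?_)
  · rintro _ ⟨u, rfl⟩
    exact bigradedEquivOfProdEquiv_lof_mem e rfl u
  · obtain rfl : j = k - i := by simp only at hij; omega
    exact le_iSup_of_le ⟨i, by omega⟩ (by rw [← LinearMap.range_comp]; rfl)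

theorem range_tensorSummand_last :
    LinearMap.range (tensorSummand e k (Fin.last k)) =
      LinearMap.range (extPowerMap k (e.toLinearMap ∘ₗ LinearMap.inl R M₁ M₃)) := by
  have hdeg0 : ⋀[R]^(k - (Fin.last k : ℕ)) M₃ = 1 := by
    rw [Fin.val_last, Nat.sub_self]
    exact pow_zero _
  apply le_antisymm
  · rw [LinearMap.range_le_iff_comap, eq_top_iff, ← TensorProduct.span_tmul_eq_top,
      Submodule.span_le]
    rintro _ ⟨x, y, rfl⟩
    obtain ⟨r, hr⟩ := Submodule.mem_one.mp (by rw [← hdeg0]; exact y.2)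
    refine ⟨r • x, Subtype.ext ?_⟩
    rw [tensorSummand_tmul, ← hr, AlgHom.commutes, ← Algebra.commutes, ← Algebra.smul_def,
      map_smul]
    rfl
  · rintro _ ⟨x, rfl⟩
    refine ⟨x ⊗ₜ ⟨1, hdeg0 ▸ Submodule.one_le.mp le_rfl⟩, Subtype.ext ?_⟩
    rw [tensorSummand_tmul, map_one, mul_one]
    rfl

end ExteriorAlgebra

theorem exteriorPower_filtration_of_ses_general {R M₁ M₂ M₃ : Type*} [CommRing R]
    [AddCommGroup M₁] [Module R M₁] [AddCommGroup M₂] [Module R M₂]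
    [AddCommGroup M₃] [Module R M₃]
    [Module.Free R M₃]
    (f : M₁ →ₗ[R] M₂) (g : M₂ →ₗ[R] M₃)
    (hf : Function.Injective f) (hg : Function.Surjective g)
    (hfg : LinearMap.range f = LinearMap.ker g) (k : ℕ) :
    Function.Injective (extPowerMap k f) ∧
      ∃ W : Fin (k + 1) → Submodule R
          ((⋀[R]^k M₂) ⧸ LinearMap.range (extPowerMap k f)),
        Monotone W ∧ W 0 = ⊥ ∧ W (Fin.last k) = ⊤ ∧
        ∀ i : Fin k,
          Nonempty (((W i.succ) ⧸ Submodule.comap (W i.succ).subtype (W i.castSucc)) ≃ₗ[R]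
            ((⋀[R]^(i : ℕ) M₁) ⊗[R] (⋀[R]^(k - (i : ℕ)) M₃))) := by
  obtain ⟨s, hs⟩ := Module.projective_lifting_property g LinearMap.id hg
  obtain ⟨e, rfl⟩ : ∃ e : M₂ ≃ₗ[R] (M₁ × M₃), f = e.symm ∘ₗ LinearMap.inl R M₁ M₃ :=
    ⟨_, ((LinearMap.exact_iff.mpr hfg.symm).splitSurjectiveEquiv hf ⟨s, hs⟩).2.1⟩
  refine ⟨?_, ?_⟩
  · rw [extPowerMap_eq_map]
    exact exteriorPower.map_injective (LinearMap.fst R M₁ M₃ ∘ₗ e) (by ext; simp)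
  · rw [← ExteriorAlgebra.range_tensorSummand_last e.symm]
    obtain ⟨W, hmono, hbot, htop, hpieces⟩ :=
      (ExteriorAlgebra.iSupIndep_range_tensorSummand e.symm k).exists_filtration_quotient_last
        (ExteriorAlgebra.iSup_range_tensorSummand e.symm k)
    exact ⟨W, hmono, hbot, htop, fun i => (hpieces i).map (· ≪≫ₗ
      (LinearEquiv.ofInjective _ (ExteriorAlgebra.tensorSummand_injective e.symm k _)).symm)⟩

/-- Given a short exact sequence `0 → M₁ → M₂ → M₃ → 0` of finite free modules over a
commutative ring (with `M₃` free, so the sequence splits), for each `k` the induced map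
`⋀^k M₁ → ⋀^k M₂` is injective and its cokernel admits a filtration
`⊥ = W 0 ≤ W 1 ≤ ⋯ ≤ W k = ⊤` whose graded pieces are
`⋀^i M₁ ⊗ ⋀^(k-i) M₃` for `0 ≤ i < k`. -/
theorem exteriorPower_filtration_of_ses {R M₁ M₂ M₃ : Type*} [CommRing R]
    [AddCommGroup M₁] [Module R M₁] [AddCommGroup M₂] [Module R M₂]
    [AddCommGroup M₃] [Module R M₃]
    [Module.Free R M₁] [Module.Finite R M₁] [Module.Free R M₂] [Module.Finite R M₂]
    [Module.Free R M₃] [Module.Finite R M₃]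
    (f : M₁ →ₗ[R] M₂) (g : M₂ →ₗ[R] M₃)
    (hf : Function.Injective f) (hg : Function.Surjective g)
    (hfg : LinearMap.range f = LinearMap.ker g) (k : ℕ) :
    Function.Injective (extPowerMap k f) ∧
      ∃ W : Fin (k + 1) → Submodule R
          ((⋀[R]^k M₂) ⧸ LinearMap.range (extPowerMap k f)),
        Monotone W ∧ W 0 = ⊥ ∧ W (Fin.last k) = ⊤ ∧
        ∀ i : Fin k,
          Nonempty (((W i.succ) ⧸ Submodule.comap (W i.succ).subtype (W i.castSucc)) ≃ₗ[R]
            ((⋀[R]^(i : ℕ) M₁) ⊗[R] (⋀[R]^(k - (i : ℕ)) M₃))) :=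
  exteriorPower_filtration_of_ses_general f g hf hg hfg k
end
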